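/- Let N̄ = 2^r, H the N̄²×N̄² Paley Hadamard basis, and Ψ_idhw the 2D isotropic discrete Haar wavelet basis (built from Kronecker products of the 1D Haar wavelet and scaling matrices over dyadic levels). Then for each row index l_p = N̄(l_y−1)+l_x, the local coherence satisfies μ_{l_p}(H^* Ψ_idhw) = min{1, 2^{−⌊log₂(max{l_x, l_y} − 1)⌋}}. -/

import Mathlib

/-- Paley-ordered Hadamard basis `H_{2^r}`, given entrywise:
`Had r i j` is the `(i,j)` entry (0-based) of the `2^r × 2^r` matrix defined by
`H_1 = [1]`, `H_{2N} = (1/√2)[H_N ⊗ (1,1)ᵀ, H_N ⊗ (1,-1)ᵀ]`. -/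
noncomputable def Had : ℕ → ℕ → ℕ → ℝ
  | 0, _, _ => 1
  | r + 1, i, j =>
    if j < 2 ^ r then (Real.sqrt 2)⁻¹ * Had r (i / 2) j
    else (if i % 2 = 0 then (1 : ℝ) else -1) * ((Real.sqrt 2)⁻¹ * Had r (i / 2) (j - 2 ^ r))

/-- 1D discrete Haar wavelet basis `W_{2^r}`, entrywise:
`W_1 = [1]`, `W_{2N} = (1/√2)[W_N ⊗ (1,1)ᵀ, I_N ⊗ (1,-1)ᵀ]`. -/
noncomputable def HaarW : ℕ → ℕ → ℕ → ℝ
  | 0, _, _ => 1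
  | r + 1, i, j =>
    if j < 2 ^ r then (Real.sqrt 2)⁻¹ * HaarW r (i / 2) j
    else (Real.sqrt 2)⁻¹ * (if i / 2 = j - 2 ^ r then (if i % 2 = 0 then (1 : ℝ) else -1) else 0)

/-- Haar scaling matrix `W⁰_{2^r}`, entrywise:
`W⁰_1 = [1]`, `W⁰_{2N} = (1/√2)[W⁰_N ⊗ (1,1)ᵀ, I_N ⊗ (1,1)ᵀ]`. -/
noncomputable def HaarW0 : ℕ → ℕ → ℕ → ℝ
  | 0, _, _ => 1
  | r + 1, i, j =>
    if j < 2 ^ r then (Real.sqrt 2)⁻¹ * HaarW0 r (i / 2) j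
    else (Real.sqrt 2)⁻¹ * (if i / 2 = j - 2 ^ r then (1 : ℝ) else 0)

/-- Entry of the 2D isotropic discrete Haar wavelet basis `Ψ_idhw` at spatial position
`(x, y)` (0-based) and column `c = (o, ℓ, a, b)`: `o = 0` is the constant column `Ψ₀`,
and `o ∈ {1,2,3}` are the three orientations `Ψ_{o,ℓ}` at dyadic level `ℓ` with intra-level
offsets `a, b < 2^{ℓ-1}`. -/
noncomputable def psiIdhw (r : ℕ) (c : ℕ × ℕ × ℕ × ℕ) (x y : ℕ) : ℝ :=
  if c.1 = 0 then ((2 : ℝ) ^ r)⁻¹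
  else if c.1 = 1 then
    HaarW0 r x (2 ^ (c.2.1 - 1) + c.2.2.1) * HaarW r y (2 ^ (c.2.1 - 1) + c.2.2.2)
  else if c.1 = 2 then
    HaarW r x (2 ^ (c.2.1 - 1) + c.2.2.1) * HaarW0 r y (2 ^ (c.2.1 - 1) + c.2.2.2)
  else
    HaarW r x (2 ^ (c.2.1 - 1) + c.2.2.1) * HaarW r y (2 ^ (c.2.1 - 1) + c.2.2.2)

/-- The set of column indices of `Ψ_idhw`. -/
def idhwCols (r : ℕ) : Finset (ℕ × ℕ × ℕ × ℕ) :=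
  insert (0, 0, 0, 0)
    (((({1, 2, 3} : Finset ℕ) ×ˢ Finset.Icc 1 r ×ˢ Finset.range (2 ^ r) ×ˢ
        Finset.range (2 ^ r))).filter
      (fun c => c.2.2.1 < 2 ^ (c.2.1 - 1) ∧ c.2.2.2 < 2 ^ (c.2.1 - 1)))

/-!
Measure the dyadic level of an index by `Nat.size`. In the Paley ordering, Hadamard column `l`
is orthogonal to every Haar wavelet column of level other than `size l` and to every scaling
column of level at most `size l`; against the remaining wavelet or scaling columns of level `ℓ`
its inner product has modulus `2^{-(ℓ-1)/2}`. This follows by induction on `r` from the block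
recursions of `H`, `W` and `W⁰`. Both 2D bases being tensor products, the coefficient of column
`(o, ℓ, a, b)` of `Ψ_idhw` is a product of two such 1D inner products: it is `2^{-(ℓ-1)}` when
`ℓ` is the larger of the levels of `l_x, l_y` and the orientation `o` matches which of them
reach it, and `0` otherwise.
-/

open Finset

lemma sum_range_two_mul {M : Type*} [AddCommMonoid M] (n : ℕ) (f : ℕ → M) :
    ∑ i ∈ range (2 * n), f i = ∑ q ∈ range n, (f (2 * q) + f (2 * q + 1)) := by
  induction n with
  | zero => simp
  | succ n ih =>
    rw [Nat.mul_succ, sum_range_succ, sum_range_succ, sum_range_succ, ← ih]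
    abel

lemma abs_Had (r i j : ℕ) : |Had r i j| = (√2 ^ r)⁻¹ := by
  induction r generalizing i j with
  | zero => simp [Had]
  | succ r ih => rw [Had]; split_ifs <;> simp [abs_mul, ih, pow_succ, mul_comm]

lemma HaarW_zero_right (r i : ℕ) : HaarW r i 0 = (√2 ^ r)⁻¹ := by
  induction r generalizing i with
  | zero => simp [HaarW]
  | succ r ih => rw [HaarW, if_pos (by positivity), ih, pow_succ, mul_inv, mul_comm]

/-- The entry `(l, j)` of `H_{2^r}ᵀ W_{2^r}`; `hadHaarW0` is the same for `W⁰_{2^r}`. -/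
noncomputable def hadHaarW (r l j : ℕ) : ℝ := ∑ x ∈ range (2 ^ r), Had r x l * HaarW r x j

noncomputable def hadHaarW0 (r l j : ℕ) : ℝ := ∑ x ∈ range (2 ^ r), Had r x l * HaarW0 r x j

lemma hadHaarW_succ (r l j : ℕ) (hj : j < 2 ^ (r + 1)) :
    hadHaarW (r + 1) l j =
      if j < 2 ^ r then (if l < 2 ^ r then hadHaarW r l j else 0)
      else (if l < 2 ^ r then 0 else Had r (j - 2 ^ r) (l - 2 ^ r)) := by
  have hpair : ∀ q, Had (r + 1) (2 * q) l * HaarW (r + 1) (2 * q) j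
      + Had (r + 1) (2 * q + 1) l * HaarW (r + 1) (2 * q + 1) j =
      if j < 2 ^ r then (if l < 2 ^ r then Had r q l * HaarW r q j else 0)
      else (if l < 2 ^ r then 0 else if q = j - 2 ^ r then Had r q (l - 2 ^ r) else 0) := by
    intro q
    simp only [Had, HaarW, Nat.mul_div_cancel_left q two_pos, Nat.mul_mod_right,
      show (2 * q + 1) / 2 = q by omega, show (2 * q + 1) % 2 = 1 by omega, one_ne_zero,
      if_true, if_false]
    split_ifs <;> ring_nf <;> simp [Real.sq_sqrt] <;> ring
  rw [hadHaarW, pow_succ', sum_range_two_mul]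
  simp only [hpair]
  split_ifs with hjr hlr
  · rfl
  · simp
  · simp
  · rw [sum_ite_eq' _ _ (fun q => Had r q (l - 2 ^ r)), if_pos (mem_range.mpr (by omega))]

lemma hadHaarW0_succ (r l j : ℕ) (hj : j < 2 ^ (r + 1)) :
    hadHaarW0 (r + 1) l j =
      if j < 2 ^ r then (if l < 2 ^ r then hadHaarW0 r l j else 0)
      else (if l < 2 ^ r then Had r (j - 2 ^ r) l else 0) := by
  have hpair : ∀ q, Had (r + 1) (2 * q) l * HaarW0 (r + 1) (2 * q) j
      + Had (r + 1) (2 * q + 1) l * HaarW0 (r + 1) (2 * q + 1) j =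
      if j < 2 ^ r then (if l < 2 ^ r then Had r q l * HaarW0 r q j else 0)
      else (if l < 2 ^ r then (if q = j - 2 ^ r then Had r q l else 0) else 0) := by
    intro q
    simp only [Had, HaarW0, Nat.mul_div_cancel_left q two_pos, Nat.mul_mod_right,
      show (2 * q + 1) / 2 = q by omega, show (2 * q + 1) % 2 = 1 by omega, one_ne_zero,
      if_true, if_false]
    split_ifs <;> ring_nf <;> simp [Real.sq_sqrt] <;> ring
  rw [hadHaarW0, pow_succ', sum_range_two_mul]
  simp only [hpair]
  split_ifs with hjr hlr
  · rfl
  · simp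
  · rw [sum_ite_eq' _ _ (fun q => Had r q l), if_pos (mem_range.mpr (by omega))]
  · simp

lemma abs_hadHaarW (r l j : ℕ) (hl : l < 2 ^ r) (hj : j < 2 ^ r) :
    |hadHaarW r l j| = if l.size = j.size then (√2 ^ (j.size - 1))⁻¹ else 0 := by
  induction r generalizing l j with
  | zero =>
    obtain rfl : l = 0 := by simpa using hl
    obtain rfl : j = 0 := by simpa using hj
    simp [hadHaarW, Had, HaarW]
  | succ r ih =>
    rw [hadHaarW_succ r l j hj]
    have hl' := Nat.size_le.mpr hl
    have hj' := Nat.size_le.mpr hj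
    by_cases hjr : j < 2 ^ r <;> by_cases hlr : l < 2 ^ r <;>
      simp only [hjr, hlr, if_true, if_false] <;> rw [← Nat.size_le] at hjr hlr
    · exact ih l j (Nat.size_le.mp hlr) (Nat.size_le.mp hjr)
    · rw [abs_zero, if_neg (by omega)]
    · rw [abs_zero, if_neg (by omega)]
    · rw [abs_Had, if_pos (by omega), show j.size - 1 = r by omega]

lemma abs_hadHaarW0 (r l j : ℕ) (hl : l < 2 ^ r) (hj0 : 0 < j) (hj : j < 2 ^ r) :
    |hadHaarW0 r l j| = if l.size < j.size then (√2 ^ (j.size - 1))⁻¹ else 0 := by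
  induction r generalizing l j with
  | zero => simp at hj; omega
  | succ r ih =>
    rw [hadHaarW0_succ r l j hj]
    have hl' := Nat.size_le.mpr hl
    have hj' := Nat.size_le.mpr hj
    by_cases hjr : j < 2 ^ r <;> by_cases hlr : l < 2 ^ r <;>
      simp only [hjr, hlr, if_true, if_false] <;> rw [← Nat.size_le] at hjr hlr
    · exact ih l j (Nat.size_le.mp hlr) hj0 (Nat.size_le.mp hjr)
    · rw [abs_zero, if_neg (by omega)]
    · rw [abs_Had, if_pos (by omega), show j.size - 1 = r by omega]
    · rw [abs_zero, if_neg (by omega)]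

lemma inv_sqrt_two_pow_mul_self (n : ℕ) : (√2 ^ n)⁻¹ * (√2 ^ n)⁻¹ = ((2 : ℝ) ^ n)⁻¹ := by
  rw [← mul_inv, ← mul_pow, Real.mul_self_sqrt zero_le_two]

lemma sum_sum_mul_mul_mul {ι κ R : Type*} [CommSemiring R] (s : Finset ι) (t : Finset κ)
    (f u : ι → R) (g v : κ → R) :
    ∑ x ∈ s, ∑ y ∈ t, f x * g y * (u x * v y) = (∑ x ∈ s, f x * u x) * ∑ y ∈ t, g y * v y := by
  rw [sum_mul_sum]
  exact sum_congr rfl fun x _ => sum_congr rfl fun y _ => by ring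

lemma size_two_pow_add {n a : ℕ} (ha : a < 2 ^ n) : (2 ^ n + a).size = n + 1 :=
  le_antisymm (Nat.size_le.mpr (by rw [pow_succ]; omega)) (Nat.lt_size.mpr (by omega))

lemma log_two_eq_size_sub_one (m : ℕ) : Nat.log 2 m = m.size - 1 := by
  rcases Nat.eq_zero_or_pos m with rfl | hm
  · simp
  · have hsize : 0 < m.size := Nat.lt_size.mpr (by simpa using hm.nat_succ_le)
    refine Nat.log_eq_of_pow_le_of_lt_pow (Nat.lt_size.mp (by omega)) ?_
    rw [Nat.sub_add_cancel hsize]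
    exact Nat.size_le.mp le_rfl

lemma size_max (m n : ℕ) : (max m n).size = max m.size n.size :=
  Monotone.map_max fun _ _ => Nat.size_le_size

noncomputable def idhwCoeff (r lx ly : ℕ) (c : ℕ × ℕ × ℕ × ℕ) : ℝ :=
  ∑ x ∈ range (2 ^ r), ∑ y ∈ range (2 ^ r), Had r x lx * Had r y ly * psiIdhw r c x y

/- The constant column `(0, 0, 0, 0)` behaves as level `c.2.1 = 0` of the third orientation,
with value `(2 ^ (0 - 1))⁻¹ = 1` by truncated subtraction. -/
lemma abs_idhwCoeff {r lx ly : ℕ} {c : ℕ × ℕ × ℕ × ℕ} (hc : c ∈ idhwCols r)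
    (hx : lx < 2 ^ r) (hy : ly < 2 ^ r) :
    |idhwCoeff r lx ly c| =
      if (if c.1 = 1 then lx.size < c.2.1 else lx.size = c.2.1) ∧
          (if c.1 = 2 then ly.size < c.2.1 else ly.size = c.2.1)
      then ((2 : ℝ) ^ (c.2.1 - 1))⁻¹ else 0 := by
  rw [idhwCols, mem_insert] at hc
  rcases hc with rfl | hc
  · have hpsi : ∀ x y, psiIdhw r (0, 0, 0, 0) x y = HaarW r x 0 * HaarW r y 0 := by
      simp [psiIdhw, HaarW_zero_right, inv_sqrt_two_pow_mul_self]
    simp only [idhwCoeff, hpsi, sum_sum_mul_mul_mul, abs_mul]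
    rw [← hadHaarW, ← hadHaarW, abs_hadHaarW r lx 0 hx (by positivity),
      abs_hadHaarW r ly 0 hy (by positivity), ite_zero_mul_ite_zero]
    simp
  obtain ⟨o, ℓ, a, b⟩ := c
  simp only [mem_filter, mem_product, mem_insert, mem_singleton, mem_Icc, mem_range] at hc
  obtain ⟨⟨ho, ⟨hℓ, hℓr⟩, -, -⟩, ha, hb⟩ := hc
  obtain ⟨n, rfl⟩ : ∃ n, ℓ = n + 1 := ⟨ℓ - 1, by omega⟩
  simp only [Nat.add_sub_cancel] at ha hb ⊢
  have hj : 2 ^ n + a < 2 ^ r := (Nat.size_le.mp (size_two_pow_add ha).le).trans_le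
    (Nat.pow_le_pow_right two_pos hℓr)
  have hk : 2 ^ n + b < 2 ^ r := (Nat.size_le.mp (size_two_pow_add hb).le).trans_le
    (Nat.pow_le_pow_right two_pos hℓr)
  rcases ho with rfl | rfl | rfl <;>
  · have hj0 : 0 < 2 ^ n + a := by positivity
    have hk0 : 0 < 2 ^ n + b := by positivity
    simp [idhwCoeff, psiIdhw, sum_sum_mul_mul_mul, ← hadHaarW.eq_1, ← hadHaarW0.eq_1,
      abs_hadHaarW, abs_hadHaarW0, hx, hy, hj, hk, hj0, hk0, size_two_pow_add, ha, hb,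
      inv_sqrt_two_pow_mul_self]
    split_ifs <;> simp_all

lemma abs_idhwCoeff_le {r lx ly : ℕ} {c : ℕ × ℕ × ℕ × ℕ} (hc : c ∈ idhwCols r)
    (hx : lx < 2 ^ r) (hy : ly < 2 ^ r) :
    |idhwCoeff r lx ly c| ≤ ((2 : ℝ) ^ (max lx.size ly.size - 1))⁻¹ := by
  rw [abs_idhwCoeff hc hx hy]
  split_ifs <;> first | positivity | rw [show c.2.1 = max lx.size ly.size by omega]

lemma exists_abs_idhwCoeff_eq {r lx ly : ℕ} (hx : lx < 2 ^ r) (hy : ly < 2 ^ r) :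
    ∃ c ∈ idhwCols r, |idhwCoeff r lx ly c| = ((2 : ℝ) ^ (max lx.size ly.size - 1))⁻¹ := by
  set s := max lx.size ly.size with hs
  rcases Nat.eq_zero_or_pos s with hs0 | hs0
  · refine ⟨(0, 0, 0, 0), mem_insert_self _ _, ?_⟩
    rw [abs_idhwCoeff (mem_insert_self _ _) hx hy, if_pos (by simp; omega), hs0]
  have hsr : s ≤ r := max_le (Nat.size_le.mpr hx) (Nat.size_le.mpr hy)
  let o := if lx.size < s then 1 else if ly.size < s then 2 else 3
  have hmem : (o, s, 0, 0) ∈ idhwCols r := by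
    refine mem_insert_of_mem (mem_filter.mpr ⟨?_, by positivity, by positivity⟩)
    simp only [mem_product, mem_insert, mem_singleton, mem_Icc, mem_range]
    refine ⟨by unfold o; split_ifs <;> simp, ⟨hs0, hsr⟩, by positivity, by positivity⟩
  refine ⟨_, hmem, ?_⟩
  rw [abs_idhwCoeff hmem hx hy, if_pos]
  unfold o
  split_ifs <;> dsimp only <;> omega

/-- Indices are 0-based, so `max lx ly` is the paper's `max{l_x, l_y} - 1`. -/
theorem stmt_10 (r lx ly : ℕ) (hx : lx < 2 ^ r) (hy : ly < 2 ^ r) :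
    (idhwCols r).sup' ⟨(0, 0, 0, 0), Finset.mem_insert_self _ _⟩
      (fun c => |∑ x ∈ Finset.range (2 ^ r), ∑ y ∈ Finset.range (2 ^ r),
        Had r x lx * Had r y ly * psiIdhw r c x y|) =
    if max lx ly ≤ 1 then 1 else ((2 : ℝ) ^ Nat.log 2 (max lx ly))⁻¹ := by
  have hrhs : (if max lx ly ≤ 1 then 1 else ((2 : ℝ) ^ Nat.log 2 (max lx ly))⁻¹) =
      ((2 : ℝ) ^ (max lx.size ly.size - 1))⁻¹ := by
    rw [← size_max, ← log_two_eq_size_sub_one]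
    split_ifs with h
    · rw [Nat.log_of_lt (by omega), pow_zero, inv_one]
    · rfl
  rw [hrhs]
  change (idhwCols r).sup' _ (fun c => |idhwCoeff r lx ly c|) = _
  obtain ⟨c, hc, hceq⟩ := exists_abs_idhwCoeff_eq hx hy
  exact le_antisymm (sup'_le _ _ fun c hc => abs_idhwCoeff_le hc hx hy)
    (hceq ▸ le_sup' (fun c => |idhwCoeff r lx ly c|) hc)
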